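/- For all compactly supported smooth functions u, v : ℝ → ℝ, one has ∫_ℝ [(−3)·(𝔓₀ δH₂)₁ + (1/2)·(𝔓₀ δH₂)₂] dx = 0, where (𝔓₀ δH₂)₁, (𝔓₀ δH₂)₂ are the two components of 𝔓₀ applied to (δH₂/δu, δH₂/δv). That is, the Poisson bracket {ℋ₀, ℋ₂} associated with 𝔓₀ vanishes: ℋ₀ and ℋ₂ are in involution with respect to 𝔓₀. -/

import Mathlib

open MeasureTheory Function

/-- `δH₂/δu = −8u² + (40/9)uv − (5/9)v² + 2u_xx − (5/9)v_xx`. -/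
noncomputable def dH2u (u v : ℝ → ℝ) (x : ℝ) : ℝ :=
  -8 * (u x) ^ 2 + (40 / 9) * u x * v x - (5 / 9) * (v x) ^ 2
    + 2 * iteratedDeriv 2 u x - (5 / 9) * iteratedDeriv 2 v x

/-- `δH₂/δv = (20/9)u² − (10/9)uv + (7/54)v² − (5/9)u_xx + (4/27)v_xx`. -/
noncomputable def dH2v (u v : ℝ → ℝ) (x : ℝ) : ℝ :=
  (20 / 9) * (u x) ^ 2 - (10 / 9) * u x * v x + (7 / 54) * (v x) ^ 2
    - (5 / 9) * iteratedDeriv 2 u x + (4 / 27) * iteratedDeriv 2 v x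

/-- First component of 𝔓₀ applied to a pair `(f, g)`: `f''' − 2u f' − u' f`. -/
noncomputable def P0fst (u : ℝ → ℝ) (f : ℝ → ℝ) (x : ℝ) : ℝ :=
  iteratedDeriv 3 f x - 2 * u x * deriv f x - deriv u x * f x

/-- Second component of 𝔓₀ applied to a pair `(f, g)`: `−9g''' + 12v g' + 6v' g`. -/
noncomputable def P0snd (v : ℝ → ℝ) (g : ℝ → ℝ) (x : ℝ) : ℝ :=
  -9 * iteratedDeriv 3 g x + 12 * v x * deriv g x + 6 * deriv v x * g x

theorem hasDerivAt_congr_d {f : ℝ → ℝ} {x a b : ℝ} (h : HasDerivAt f a x) (e : a = b) :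
    HasDerivAt f b x := e ▸ h

theorem hd1 {f f' : ℝ → ℝ} (c : ℝ) (hf : ∀ x, HasDerivAt f (f' x) x) (x : ℝ) :
    HasDerivAt (fun y => c * f y) (c * f' x) x := (hf x).const_mul c

theorem hd2 {f f' g g' : ℝ → ℝ} (c : ℝ) (hf : ∀ x, HasDerivAt f (f' x) x)
    (hg : ∀ x, HasDerivAt g (g' x) x) (x : ℝ) :
    HasDerivAt (fun y => c * f y * g y) (c * f' x * g x + c * f x * g' x) x :=
  ((hf x).const_mul c).mul (hg x)

theorem hd3 {f f' g g' h h' : ℝ → ℝ} (c : ℝ) (hf : ∀ x, HasDerivAt f (f' x) x)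
    (hg : ∀ x, HasDerivAt g (g' x) x) (hh : ∀ x, HasDerivAt h (h' x) x) (x : ℝ) :
    HasDerivAt (fun y => c * f y * g y * h y)
      (c * f' x * g x * h x + c * f x * g' x * h x + c * f x * g x * h' x) x := by
  have h2 := (((hf x).const_mul c).mul (hg x)).mul (hh x)
  exact hasDerivAt_congr_d h2 (by simp only [Pi.mul_apply]; ring)

theorem smooth_iteratedDeriv {f : ℝ → ℝ} (hf : ContDiff ℝ (⊤ : ℕ∞) f) (k : ℕ) :
    ContDiff ℝ (⊤ : ℕ∞) (iteratedDeriv k f) := by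
  rw [iteratedDeriv_eq_iterate]
  exact ContDiff.iterate_deriv k hf

theorem hasDerivAt_iteratedDeriv' {f : ℝ → ℝ} (hf : ContDiff ℝ (⊤ : ℕ∞) f) (k : ℕ) (x : ℝ) :
    HasDerivAt (iteratedDeriv k f) (iteratedDeriv (k + 1) f x) x := by
  rw [iteratedDeriv_succ]
  exact ((smooth_iteratedDeriv hf k).differentiable (by simp)).differentiableAt.hasDerivAt

theorem tsupport_iteratedDeriv_subset (f : ℝ → ℝ) (k : ℕ) :
    tsupport (iteratedDeriv k f) ⊆ tsupport f := by
  induction k with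
  | zero => rw [iteratedDeriv_zero]
  | succ n ih =>
      rw [iteratedDeriv_succ]
      exact closure_minimal (support_deriv_subset.trans ih) (isClosed_tsupport f)

theorem integral_deriv_eq_zero' {f : ℝ → ℝ} (hf : ContDiff ℝ (⊤ : ℕ∞) f)
    (hc : HasCompactSupport f) : ∫ x : ℝ, deriv f x = 0 := by
  have hf1 : ContDiff ℝ 1 f := hf.of_le (by exact_mod_cast le_top)
  have hcont : Continuous (deriv f) := hf.continuous_deriv (by exact_mod_cast le_top)
  have hi : Integrable (deriv f) := hcont.integrable_of_hasCompactSupport hc.deriv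
  have h1 := HasCompactSupport.integral_Iic_deriv_eq hf1 hc 0
  have h2 := HasCompactSupport.integral_Ioi_deriv_eq hf1 hc 0
  rw [← intervalIntegral.integral_Iic_add_Ioi (b := 0) hi.integrableOn hi.integrableOn, h1, h2]
  ring

theorem iteratedDeriv_three (f : ℝ → ℝ) : iteratedDeriv 3 f = deriv (deriv (deriv f)) := by
  rw [show (3:ℕ) = 2+1 from rfl, iteratedDeriv_succ, show (2:ℕ) = 1+1 from rfl, iteratedDeriv_succ,
    show (1:ℕ) = 0+1 from rfl, iteratedDeriv_succ, iteratedDeriv_zero]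

/-- For compactly supported smooth `u, v`, the Poisson bracket
`{ℋ₀, ℋ₂} = ∫ (δH₀/δu, δH₀/δv)·𝔓₀(δH₂/δu, δH₂/δv) dx` associated with 𝔓₀ vanishes:
`ℋ₀` and `ℋ₂` are in involution with respect to 𝔓₀. -/
theorem H0_H2_in_involution (u v : ℝ → ℝ)
    (hu : ContDiff ℝ (⊤ : ℕ∞) u) (hv : ContDiff ℝ (⊤ : ℕ∞) v)
    (huc : HasCompactSupport u) (hvc : HasCompactSupport v) :
    ∫ x : ℝ,
      ((-3 : ℝ) * P0fst u (dH2u u v) x + (1 / 2 : ℝ) * P0snd v (dH2v u v) x) = 0 := by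
  have hu' : ContDiff ℝ (⊤ : ℕ∞) u := hu.of_le (by simp)
  have hv' : ContDiff ℝ (⊤ : ℕ∞) v := hv.of_le (by simp)
  have hcu : ∀ k, ContDiff ℝ (⊤ : ℕ∞) (iteratedDeriv k u) := smooth_iteratedDeriv hu'
  have hcv : ∀ k, ContDiff ℝ (⊤ : ℕ∞) (iteratedDeriv k v) := smooth_iteratedDeriv hv'
  have hu0 : ∀ x, HasDerivAt u (iteratedDeriv 1 u x) x := fun x => by
    simpa using hasDerivAt_iteratedDeriv' hu' 0 x
  have hv0 : ∀ x, HasDerivAt v (iteratedDeriv 1 v x) x := fun x => by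
    simpa using hasDerivAt_iteratedDeriv' hv' 0 x
  have hu1 : ∀ x, HasDerivAt (iteratedDeriv 1 u) (iteratedDeriv 2 u x) x :=
    hasDerivAt_iteratedDeriv' hu' 1
  have hu2 : ∀ x, HasDerivAt (iteratedDeriv 2 u) (iteratedDeriv 3 u x) x :=
    hasDerivAt_iteratedDeriv' hu' 2
  have hu3 : ∀ x, HasDerivAt (iteratedDeriv 3 u) (iteratedDeriv 4 u x) x :=
    hasDerivAt_iteratedDeriv' hu' 3
  have hu4 : ∀ x, HasDerivAt (iteratedDeriv 4 u) (iteratedDeriv 5 u x) x :=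
    hasDerivAt_iteratedDeriv' hu' 4
  have hv1 : ∀ x, HasDerivAt (iteratedDeriv 1 v) (iteratedDeriv 2 v x) x :=
    hasDerivAt_iteratedDeriv' hv' 1
  have hv2 : ∀ x, HasDerivAt (iteratedDeriv 2 v) (iteratedDeriv 3 v x) x :=
    hasDerivAt_iteratedDeriv' hv' 2
  have hv3 : ∀ x, HasDerivAt (iteratedDeriv 3 v) (iteratedDeriv 4 v x) x :=
    hasDerivAt_iteratedDeriv' hv' 3
  have hv4 : ∀ x, HasDerivAt (iteratedDeriv 4 v) (iteratedDeriv 5 v x) x :=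
    hasDerivAt_iteratedDeriv' hv' 4
  have hFeq : dH2u u v = (fun y => (-5/9 : ℝ) * iteratedDeriv 2 v y + (-5/9 : ℝ) * v y * v y + (2 : ℝ) * iteratedDeriv 2 u y + (40/9 : ℝ) * u y * v y + (-8 : ℝ) * u y * u y) := by
    funext y; simp only [dH2u]; ring
  have hF0d : ∀ x, HasDerivAt (fun y => (-5/9 : ℝ) * iteratedDeriv 2 v y + (-5/9 : ℝ) * v y * v y + (2 : ℝ) * iteratedDeriv 2 u y + (40/9 : ℝ) * u y * v y + (-8 : ℝ) * u y * u y) ((fun y => (-5/9 : ℝ) * iteratedDeriv 3 v y + (-10/9 : ℝ) * v y * iteratedDeriv 1 v y + (2 : ℝ) * iteratedDeriv 3 u y + (40/9 : ℝ) * iteratedDeriv 1 u y * v y + (40/9 : ℝ) * u y * iteratedDeriv 1 v y + (-16 : ℝ) * u y * iteratedDeriv 1 u y) x) x := fun x =>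
    hasDerivAt_congr_d (((((hd1 (-5/9 : ℝ) hv2 x).add (hd2 (-5/9 : ℝ) hv0 hv0 x)).add (hd1 (2 : ℝ) hu2 x)).add (hd2 (40/9 : ℝ) hu0 hv0 x)).add (hd2 (-8 : ℝ) hu0 hu0 x)) (by ring)
  have eF0 : deriv (fun y => (-5/9 : ℝ) * iteratedDeriv 2 v y + (-5/9 : ℝ) * v y * v y + (2 : ℝ) * iteratedDeriv 2 u y + (40/9 : ℝ) * u y * v y + (-8 : ℝ) * u y * u y) = (fun y => (-5/9 : ℝ) * iteratedDeriv 3 v y + (-10/9 : ℝ) * v y * iteratedDeriv 1 v y + (2 : ℝ) * iteratedDeriv 3 u y + (40/9 : ℝ) * iteratedDeriv 1 u y * v y + (40/9 : ℝ) * u y * iteratedDeriv 1 v y + (-16 : ℝ) * u y * iteratedDeriv 1 u y) :=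
    funext fun x => (hF0d x).deriv
  have hF1d : ∀ x, HasDerivAt (fun y => (-5/9 : ℝ) * iteratedDeriv 3 v y + (-10/9 : ℝ) * v y * iteratedDeriv 1 v y + (2 : ℝ) * iteratedDeriv 3 u y + (40/9 : ℝ) * iteratedDeriv 1 u y * v y + (40/9 : ℝ) * u y * iteratedDeriv 1 v y + (-16 : ℝ) * u y * iteratedDeriv 1 u y) ((fun y => (-5/9 : ℝ) * iteratedDeriv 4 v y + (-10/9 : ℝ) * iteratedDeriv 1 v y * iteratedDeriv 1 v y + (-10/9 : ℝ) * v y * iteratedDeriv 2 v y + (2 : ℝ) * iteratedDeriv 4 u y + (40/9 : ℝ) * iteratedDeriv 2 u y * v y + (80/9 : ℝ) * iteratedDeriv 1 u y * iteratedDeriv 1 v y + (-16 : ℝ) * iteratedDeriv 1 u y * iteratedDeriv 1 u y + (40/9 : ℝ) * u y * iteratedDeriv 2 v y + (-16 : ℝ) * u y * iteratedDeriv 2 u y) x) x := fun x =>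
    hasDerivAt_congr_d ((((((hd1 (-5/9 : ℝ) hv3 x).add (hd2 (-10/9 : ℝ) hv0 hv1 x)).add (hd1 (2 : ℝ) hu3 x)).add (hd2 (40/9 : ℝ) hu1 hv0 x)).add (hd2 (40/9 : ℝ) hu0 hv1 x)).add (hd2 (-16 : ℝ) hu0 hu1 x)) (by ring)
  have eF1 : deriv (fun y => (-5/9 : ℝ) * iteratedDeriv 3 v y + (-10/9 : ℝ) * v y * iteratedDeriv 1 v y + (2 : ℝ) * iteratedDeriv 3 u y + (40/9 : ℝ) * iteratedDeriv 1 u y * v y + (40/9 : ℝ) * u y * iteratedDeriv 1 v y + (-16 : ℝ) * u y * iteratedDeriv 1 u y) = (fun y => (-5/9 : ℝ) * iteratedDeriv 4 v y + (-10/9 : ℝ) * iteratedDeriv 1 v y * iteratedDeriv 1 v y + (-10/9 : ℝ) * v y * iteratedDeriv 2 v y + (2 : ℝ) * iteratedDeriv 4 u y + (40/9 : ℝ) * iteratedDeriv 2 u y * v y + (80/9 : ℝ) * iteratedDeriv 1 u y * iteratedDeriv 1 v y + (-16 : ℝ) * iteratedDeriv 1 u y * iteratedDeriv 1 u y + (40/9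 : ℝ) * u y * iteratedDeriv 2 v y + (-16 : ℝ) * u y * iteratedDeriv 2 u y) :=
    funext fun x => (hF1d x).deriv
  have hF2d : ∀ x, HasDerivAt (fun y => (-5/9 : ℝ) * iteratedDeriv 4 v y + (-10/9 : ℝ) * iteratedDeriv 1 v y * iteratedDeriv 1 v y + (-10/9 : ℝ) * v y * iteratedDeriv 2 v y + (2 : ℝ) * iteratedDeriv 4 u y + (40/9 : ℝ) * iteratedDeriv 2 u y * v y + (80/9 : ℝ) * iteratedDeriv 1 u y * iteratedDeriv 1 v y + (-16 : ℝ) * iteratedDeriv 1 u y * iteratedDeriv 1 u y + (40/9 : ℝ) * u y * iteratedDeriv 2 v y + (-16 : ℝ) * u y * iteratedDeriv 2 u y) ((fun y => (-5/9 : ℝ) * iteratedDeriv 5 v y + (-10/3 : ℝ) * iteratedDeriv 1 v y * iteratedDeriv 2 v y + (-10/9 : ℝ) * v y * iteratedDeriv 3 v y + (2 : ℝ) * iteratedDeriv 5 u y + (40/9 : ℝ) * iteratedDeriv 3 u y * v y + (40/3 : ℝ) * iteratedDeriv 2 u y * iteratedDeriv 1 v y + (40/3 : ℝ) * iteratedDeriv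 1 u y * iteratedDeriv 2 v y + (-48 : ℝ) * iteratedDeriv 1 u y * iteratedDeriv 2 u y + (40/9 : ℝ) * u y * iteratedDeriv 3 v y + (-16 : ℝ) * u y * iteratedDeriv 3 u y) x) x := fun x =>
    hasDerivAt_congr_d (((((((((hd1 (-5/9 : ℝ) hv4 x).add (hd2 (-10/9 : ℝ) hv1 hv1 x)).add (hd2 (-10/9 : ℝ) hv0 hv2 x)).add (hd1 (2 : ℝ) hu4 x)).add (hd2 (40/9 : ℝ) hu2 hv0 x)).add (hd2 (80/9 : ℝ) hu1 hv1 x)).add (hd2 (-16 : ℝ) hu1 hu1 x)).add (hd2 (40/9 : ℝ) hu0 hv2 x)).add (hd2 (-16 : ℝ) hu0 hu2 x)) (by ring)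
  have eF2 : deriv (fun y => (-5/9 : ℝ) * iteratedDeriv 4 v y + (-10/9 : ℝ) * iteratedDeriv 1 v y * iteratedDeriv 1 v y + (-10/9 : ℝ) * v y * iteratedDeriv 2 v y + (2 : ℝ) * iteratedDeriv 4 u y + (40/9 : ℝ) * iteratedDeriv 2 u y * v y + (80/9 : ℝ) * iteratedDeriv 1 u y * iteratedDeriv 1 v y + (-16 : ℝ) * iteratedDeriv 1 u y * iteratedDeriv 1 u y + (40/9 : ℝ) * u y * iteratedDeriv 2 v y + (-16 : ℝ) * u y * iteratedDeriv 2 u y) = (fun y => (-5/9 : ℝ) * iteratedDeriv 5 v y + (-10/3 : ℝ) * iteratedDeriv 1 v y * iteratedDeriv 2 v y + (-10/9 : ℝ) * v y * iteratedDeriv 3 v y + (2 : ℝ) * iteratedDeriv 5 u y + (40/9 : ℝ) * iteratedDeriv 3 u y * v y + (40/3 : ℝ) * iteratedDeriv 2 u y * iteratedDeriv 1 v y + (40/3 : ℝ) * iteratedDeriv 1 u y * iteratedDeriv 2 v y + (-48 : ℝ) * iteratedDeriv 1 u y * iteratedDeriv 2 u y + (40/9 : ℝ) * u y * iteratedDeriv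 3 v y + (-16 : ℝ) * u y * iteratedDeriv 3 u y) :=
    funext fun x => (hF2d x).deriv
  have h3F : iteratedDeriv 3 (dH2u u v) = (fun y => (-5/9 : ℝ) * iteratedDeriv 5 v y + (-10/3 : ℝ) * iteratedDeriv 1 v y * iteratedDeriv 2 v y + (-10/9 : ℝ) * v y * iteratedDeriv 3 v y + (2 : ℝ) * iteratedDeriv 5 u y + (40/9 : ℝ) * iteratedDeriv 3 u y * v y + (40/3 : ℝ) * iteratedDeriv 2 u y * iteratedDeriv 1 v y + (40/3 : ℝ) * iteratedDeriv 1 u y * iteratedDeriv 2 v y + (-48 : ℝ) * iteratedDeriv 1 u y * iteratedDeriv 2 u y + (40/9 : ℝ) * u y * iteratedDeriv 3 v y + (-16 : ℝ) * u y * iteratedDeriv 3 u y) := by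
    rw [hFeq]
    rw [iteratedDeriv_three]
    rw [eF0, eF1, eF2]
  have hGeq : dH2v u v = (fun y => (4/27 : ℝ) * iteratedDeriv 2 v y + (7/54 : ℝ) * v y * v y + (-5/9 : ℝ) * iteratedDeriv 2 u y + (-10/9 : ℝ) * u y * v y + (20/9 : ℝ) * u y * u y) := by
    funext y; simp only [dH2v]; ring
  have hG0d : ∀ x, HasDerivAt (fun y => (4/27 : ℝ) * iteratedDeriv 2 v y + (7/54 : ℝ) * v y * v y + (-5/9 : ℝ) * iteratedDeriv 2 u y + (-10/9 : ℝ) * u y * v y + (20/9 : ℝ) * u y * u y) ((fun y => (4/27 : ℝ) * iteratedDeriv 3 v y + (7/27 : ℝ) * v y * iteratedDeriv 1 v y + (-5/9 : ℝ) * iteratedDeriv 3 u y + (-10/9 : ℝ) * iteratedDeriv 1 u y * v y + (-10/9 : ℝ) * u y * iteratedDeriv 1 v y + (40/9 : ℝ) * u y * iteratedDeriv 1 u y) x) x := fun x =>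
    hasDerivAt_congr_d (((((hd1 (4/27 : ℝ) hv2 x).add (hd2 (7/54 : ℝ) hv0 hv0 x)).add (hd1 (-5/9 : ℝ) hu2 x)).add (hd2 (-10/9 : ℝ) hu0 hv0 x)).add (hd2 (20/9 : ℝ) hu0 hu0 x)) (by ring)
  have eG0 : deriv (fun y => (4/27 : ℝ) * iteratedDeriv 2 v y + (7/54 : ℝ) * v y * v y + (-5/9 : ℝ) * iteratedDeriv 2 u y + (-10/9 : ℝ) * u y * v y + (20/9 : ℝ) * u y * u y) = (fun y => (4/27 : ℝ) * iteratedDeriv 3 v y + (7/27 : ℝ) * v y * iteratedDeriv 1 v y + (-5/9 : ℝ) * iteratedDeriv 3 u y + (-10/9 : ℝ) * iteratedDeriv 1 u y * v y + (-10/9 : ℝ) * u y * iteratedDeriv 1 v y + (40/9 : ℝ) * u y * iteratedDeriv 1 u y) :=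
    funext fun x => (hG0d x).deriv
  have hG1d : ∀ x, HasDerivAt (fun y => (4/27 : ℝ) * iteratedDeriv 3 v y + (7/27 : ℝ) * v y * iteratedDeriv 1 v y + (-5/9 : ℝ) * iteratedDeriv 3 u y + (-10/9 : ℝ) * iteratedDeriv 1 u y * v y + (-10/9 : ℝ) * u y * iteratedDeriv 1 v y + (40/9 : ℝ) * u y * iteratedDeriv 1 u y) ((fun y => (4/27 : ℝ) * iteratedDeriv 4 v y + (7/27 : ℝ) * iteratedDeriv 1 v y * iteratedDeriv 1 v y + (7/27 : ℝ) * v y * iteratedDeriv 2 v y + (-5/9 : ℝ) * iteratedDeriv 4 u y + (-10/9 : ℝ) * iteratedDeriv 2 u y * v y + (-20/9 : ℝ) * iteratedDeriv 1 u y * iteratedDeriv 1 v y + (40/9 : ℝ) * iteratedDeriv 1 u y * iteratedDeriv 1 u y + (-10/9 : ℝ) * u y * iteratedDeriv 2 v y + (40/9 : ℝ) * u y * iteratedDeriv 2 u y) x) x := fun x =>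
    hasDerivAt_congr_d ((((((hd1 (4/27 : ℝ) hv3 x).add (hd2 (7/27 : ℝ) hv0 hv1 x)).add (hd1 (-5/9 : ℝ) hu3 x)).add (hd2 (-10/9 : ℝ) hu1 hv0 x)).add (hd2 (-10/9 : ℝ) hu0 hv1 x)).add (hd2 (40/9 : ℝ) hu0 hu1 x)) (by ring)
  have eG1 : deriv (fun y => (4/27 : ℝ) * iteratedDeriv 3 v y + (7/27 : ℝ) * v y * iteratedDeriv 1 v y + (-5/9 : ℝ) * iteratedDeriv 3 u y + (-10/9 : ℝ) * iteratedDeriv 1 u y * v y + (-10/9 : ℝ) * u y * iteratedDeriv 1 v y + (40/9 : ℝ) * u y * iteratedDeriv 1 u y) = (fun y => (4/27 : ℝ) * iteratedDeriv 4 v y + (7/27 : ℝ) * iteratedDeriv 1 v y * iteratedDeriv 1 v y + (7/27 : ℝ) * v y * iteratedDeriv 2 v y + (-5/9 : ℝ) * iteratedDeriv 4 u y + (-10/9 : ℝ) * iteratedDeriv 2 u y * v y + (-20/9 : ℝ) * iteratedDeriv 1 u y * iteratedDeriv 1 v y + (40/9 : ℝ) * iteratedDeriv 1 u y * iteratedDeriv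 1 u y + (-10/9 : ℝ) * u y * iteratedDeriv 2 v y + (40/9 : ℝ) * u y * iteratedDeriv 2 u y) :=
    funext fun x => (hG1d x).deriv
  have hG2d : ∀ x, HasDerivAt (fun y => (4/27 : ℝ) * iteratedDeriv 4 v y + (7/27 : ℝ) * iteratedDeriv 1 v y * iteratedDeriv 1 v y + (7/27 : ℝ) * v y * iteratedDeriv 2 v y + (-5/9 : ℝ) * iteratedDeriv 4 u y + (-10/9 : ℝ) * iteratedDeriv 2 u y * v y + (-20/9 : ℝ) * iteratedDeriv 1 u y * iteratedDeriv 1 v y + (40/9 : ℝ) * iteratedDeriv 1 u y * iteratedDeriv 1 u y + (-10/9 : ℝ) * u y * iteratedDeriv 2 v y + (40/9 : ℝ) * u y * iteratedDeriv 2 u y) ((fun y => (4/27 : ℝ) * iteratedDeriv 5 v y + (7/9 : ℝ) * iteratedDeriv 1 v y * iteratedDeriv 2 v y + (7/27 : ℝ) * v y * iteratedDeriv 3 v y + (-5/9 : ℝ) * iteratedDeriv 5 u y + (-10/9 : ℝ) * iteratedDeriv 3 u y * v y + (-10/3 : ℝ) * iteratedDeriv 2 u y * iteratedDeriv 1 v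 y + (-10/3 : ℝ) * iteratedDeriv 1 u y * iteratedDeriv 2 v y + (40/3 : ℝ) * iteratedDeriv 1 u y * iteratedDeriv 2 u y + (-10/9 : ℝ) * u y * iteratedDeriv 3 v y + (40/9 : ℝ) * u y * iteratedDeriv 3 u y) x) x := fun x =>
    hasDerivAt_congr_d (((((((((hd1 (4/27 : ℝ) hv4 x).add (hd2 (7/27 : ℝ) hv1 hv1 x)).add (hd2 (7/27 : ℝ) hv0 hv2 x)).add (hd1 (-5/9 : ℝ) hu4 x)).add (hd2 (-10/9 : ℝ) hu2 hv0 x)).add (hd2 (-20/9 : ℝ) hu1 hv1 x)).add (hd2 (40/9 : ℝ) hu1 hu1 x)).add (hd2 (-10/9 : ℝ) hu0 hv2 x)).add (hd2 (40/9 : ℝ) hu0 hu2 x)) (by ring)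
  have eG2 : deriv (fun y => (4/27 : ℝ) * iteratedDeriv 4 v y + (7/27 : ℝ) * iteratedDeriv 1 v y * iteratedDeriv 1 v y + (7/27 : ℝ) * v y * iteratedDeriv 2 v y + (-5/9 : ℝ) * iteratedDeriv 4 u y + (-10/9 : ℝ) * iteratedDeriv 2 u y * v y + (-20/9 : ℝ) * iteratedDeriv 1 u y * iteratedDeriv 1 v y + (40/9 : ℝ) * iteratedDeriv 1 u y * iteratedDeriv 1 u y + (-10/9 : ℝ) * u y * iteratedDeriv 2 v y + (40/9 : ℝ) * u y * iteratedDeriv 2 u y) = (fun y => (4/27 : ℝ) * iteratedDeriv 5 v y + (7/9 : ℝ) * iteratedDeriv 1 v y * iteratedDeriv 2 v y + (7/27 : ℝ) * v y * iteratedDeriv 3 v y + (-5/9 : ℝ) * iteratedDeriv 5 u y + (-10/9 : ℝ) * iteratedDeriv 3 u y * v y + (-10/3 : ℝ) * iteratedDeriv 2 u y * iteratedDeriv 1 v y + (-10/3 : ℝ) * iteratedDeriv 1 u y * iteratedDeriv 2 v y + (40/3 : ℝ) * iteratedDeriv 1 u y * iteratedDeriv 2 u y + (-10/9 : ℝ)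 * u y * iteratedDeriv 3 v y + (40/9 : ℝ) * u y * iteratedDeriv 3 u y) :=
    funext fun x => (hG2d x).deriv
  have h3G : iteratedDeriv 3 (dH2v u v) = (fun y => (4/27 : ℝ) * iteratedDeriv 5 v y + (7/9 : ℝ) * iteratedDeriv 1 v y * iteratedDeriv 2 v y + (7/27 : ℝ) * v y * iteratedDeriv 3 v y + (-5/9 : ℝ) * iteratedDeriv 5 u y + (-10/9 : ℝ) * iteratedDeriv 3 u y * v y + (-10/3 : ℝ) * iteratedDeriv 2 u y * iteratedDeriv 1 v y + (-10/3 : ℝ) * iteratedDeriv 1 u y * iteratedDeriv 2 v y + (40/3 : ℝ) * iteratedDeriv 1 u y * iteratedDeriv 2 u y + (-10/9 : ℝ) * u y * iteratedDeriv 3 v y + (40/9 : ℝ) * u y * iteratedDeriv 3 u y) := by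
    rw [hGeq]
    rw [iteratedDeriv_three]
    rw [eG0, eG1, eG2]
  have hWd : ∀ x, HasDerivAt (fun y => (1 : ℝ) * iteratedDeriv 4 v y + (35/18 : ℝ) * iteratedDeriv 1 v y * iteratedDeriv 1 v y + (55/18 : ℝ) * v y * iteratedDeriv 2 v y + (35/54 : ℝ) * v y * v y * v y + (-7/2 : ℝ) * iteratedDeriv 4 u y + (-35/3 : ℝ) * iteratedDeriv 2 u y * v y + (-15 : ℝ) * iteratedDeriv 1 u y * iteratedDeriv 1 v y + (25 : ℝ) * iteratedDeriv 1 u y * iteratedDeriv 1 u y + (-35/3 : ℝ) * u y * iteratedDeriv 2 v y + (-25/3 : ℝ) * u y * v y * v y + (40 : ℝ) * u y * iteratedDeriv 2 u y + (100/3 : ℝ) * u y * u y * v y + (-40 : ℝ) * u y * u y * u y) ((fun y => (1 : ℝ) * iteratedDeriv 5 v y + (125/18 : ℝ) * iteratedDeriv 1 v y * iteratedDeriv 2 v y + (55/18 : ℝ) * v y * iteratedDeriv 3 v y + (35/18 : ℝ) * v y * v y * iteratedDeriv 1 v y + (-7/2 : ℝ) * iteratedDeriv 5 u y + (-35/3 :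 ℝ) * iteratedDeriv 3 u y * v y + (-80/3 : ℝ) * iteratedDeriv 2 u y * iteratedDeriv 1 v y + (-80/3 : ℝ) * iteratedDeriv 1 u y * iteratedDeriv 2 v y + (-25/3 : ℝ) * iteratedDeriv 1 u y * v y * v y + (90 : ℝ) * iteratedDeriv 1 u y * iteratedDeriv 2 u y + (-35/3 : ℝ) * u y * iteratedDeriv 3 v y + (-50/3 : ℝ) * u y * v y * iteratedDeriv 1 v y + (40 : ℝ) * u y * iteratedDeriv 3 u y + (200/3 : ℝ) * u y * iteratedDeriv 1 u y * v y + (100/3 : ℝ) * u y * u y * iteratedDeriv 1 v y + (-120 : ℝ) * u y * u y * iteratedDeriv 1 u y) x) x := fun x =>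
    hasDerivAt_congr_d (((((((((((((hd1 (1 : ℝ) hv4 x).add (hd2 (35/18 : ℝ) hv1 hv1 x)).add (hd2 (55/18 : ℝ) hv0 hv2 x)).add (hd3 (35/54 : ℝ) hv0 hv0 hv0 x)).add (hd1 (-7/2 : ℝ) hu4 x)).add (hd2 (-35/3 : ℝ) hu2 hv0 x)).add (hd2 (-15 : ℝ) hu1 hv1 x)).add (hd2 (25 : ℝ) hu1 hu1 x)).add (hd2 (-35/3 : ℝ) hu0 hv2 x)).add (hd3 (-25/3 : ℝ) hu0 hv0 hv0 x)).add (hd2 (40 : ℝ) hu0 hu2 x)).add (hd3 (100/3 : ℝ) hu0 hu0 hv0 x)).add (hd3 (-40 : ℝ) hu0 hu0 hu0 x)) (by ring)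
  have hWc : ContDiff ℝ (⊤ : ℕ∞) (fun y => (1 : ℝ) * iteratedDeriv 4 v y + (35/18 : ℝ) * iteratedDeriv 1 v y * iteratedDeriv 1 v y + (55/18 : ℝ) * v y * iteratedDeriv 2 v y + (35/54 : ℝ) * v y * v y * v y + (-7/2 : ℝ) * iteratedDeriv 4 u y + (-35/3 : ℝ) * iteratedDeriv 2 u y * v y + (-15 : ℝ) * iteratedDeriv 1 u y * iteratedDeriv 1 v y + (25 : ℝ) * iteratedDeriv 1 u y * iteratedDeriv 1 u y + (-35/3 : ℝ) * u y * iteratedDeriv 2 v y + (-25/3 : ℝ) * u y * v y * v y + (40 : ℝ) * u y * iteratedDeriv 2 u y + (100/3 : ℝ) * u y * u y * v y + (-40 : ℝ) * u y * u y * u y) := by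
    exact (((((((((((((contDiff_const.mul (hcv 4)).add ((contDiff_const.mul (hcv 1)).mul (hcv 1))).add ((contDiff_const.mul (hcv 0)).mul (hcv 2))).add (((contDiff_const.mul (hcv 0)).mul (hcv 0)).mul (hcv 0))).add (contDiff_const.mul (hcu 4))).add ((contDiff_const.mul (hcu 2)).mul (hcv 0))).add ((contDiff_const.mul (hcu 1)).mul (hcv 1))).add ((contDiff_const.mul (hcu 1)).mul (hcu 1))).add ((contDiff_const.mul (hcu 0)).mul (hcv 2))).add (((contDiff_const.mul (hcu 0)).mul (hcv 0)).mul (hcv 0))).add ((contDiff_const.mul (hcu 0)).mul (hcu 2))).add (((contDiff_const.mul (hcu 0)).mul (hcu 0)).mul (hcv 0))).add (((contDiff_const.mul (hcu 0)).mul (hcu 0)).mul (hcu 0)))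
  have hWs : HasCompactSupport (fun y => (1 : ℝ) * iteratedDeriv 4 v y + (35/18 : ℝ) * iteratedDeriv 1 v y * iteratedDeriv 1 v y + (55/18 : ℝ) * v y * iteratedDeriv 2 v y + (35/54 : ℝ) * v y * v y * v y + (-7/2 : ℝ) * iteratedDeriv 4 u y + (-35/3 : ℝ) * iteratedDeriv 2 u y * v y + (-15 : ℝ) * iteratedDeriv 1 u y * iteratedDeriv 1 v y + (25 : ℝ) * iteratedDeriv 1 u y * iteratedDeriv 1 u y + (-35/3 : ℝ) * u y * iteratedDeriv 2 v y + (-25/3 : ℝ) * u y * v y * v y + (40 : ℝ) * u y * iteratedDeriv 2 u y + (100/3 : ℝ) * u y * u y * v y + (-40 : ℝ) * u y * u y * u y) := by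
    apply HasCompactSupport.intro (huc.union hvc)
    intro x hx
    have hxu : x ∉ tsupport u := fun h => hx (Set.mem_union_left _ h)
    have hxv : x ∉ tsupport v := fun h => hx (Set.mem_union_right _ h)
    have h1 : ∀ k, iteratedDeriv k u x = 0 := fun k =>
      image_eq_zero_of_notMem_tsupport (fun h => hxu (tsupport_iteratedDeriv_subset u k h))
    have h2 : ∀ k, iteratedDeriv k v x = 0 := fun k =>
      image_eq_zero_of_notMem_tsupport (fun h => hxv (tsupport_iteratedDeriv_subset v k h))
    have h0u : u x = 0 := image_eq_zero_of_notMem_tsupport hxu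
    have h0v : v x = 0 := image_eq_zero_of_notMem_tsupport hxv
    simp only [h1, h2, h0u, h0v, mul_zero, zero_mul, add_zero, zero_add]
  have key : (fun x : ℝ => (-3 : ℝ) * P0fst u (dH2u u v) x + (1 / 2 : ℝ) * P0snd v (dH2v u v) x)
      = deriv (fun y => (1 : ℝ) * iteratedDeriv 4 v y + (35/18 : ℝ) * iteratedDeriv 1 v y * iteratedDeriv 1 v y + (55/18 : ℝ) * v y * iteratedDeriv 2 v y + (35/54 : ℝ) * v y * v y * v y + (-7/2 : ℝ) * iteratedDeriv 4 u y + (-35/3 : ℝ) * iteratedDeriv 2 u y * v y + (-15 : ℝ) * iteratedDeriv 1 u y * iteratedDeriv 1 v y + (25 : ℝ) * iteratedDeriv 1 u y * iteratedDeriv 1 u y + (-35/3 : ℝ) * u y * iteratedDeriv 2 v y + (-25/3 : ℝ) * u y * v y * v y + (40 : ℝ) * u y * iteratedDeriv 2 u y + (100/3 : ℝ) * u y * u y * v y + (-40 : ℝ) * u y * u y * u y) := by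
    funext x
    rw [(hWd x).deriv]
    simp only [P0fst, P0snd, h3F, h3G]
    simp only [hFeq, hGeq, eF0, eG0, (hu0 x).deriv, (hv0 x).deriv]
    ring
  rw [key]
  exact integral_deriv_eq_zero' hWc hWs
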